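/- As a left module over itself, I_1 decomposes as the direct sum of left ideals I_1 = I_1·∂ ⊕ I_1·e_00 (i.e. the left ideals I_1∂ and I_1 e_00 have zero intersection and their sum is I_1); applying the involution, as a right module I_1 = ∫·I_1 ⊕ e_00·I_1. -/
import Mathlib


/-- Multiplication by `x`. -/
noncomputable def xOp1 (K : Type*) [Field K] : Module.End K (Polynomial K) :=
  LinearMap.mulLeft K Polynomial.X

/-- The formal derivative `d/dx`. -/
noncomputable def dOp1 (K : Type*) [Field K] : Module.End K (Polynomial K) :=
  Polynomial.derivative

/-- Integration, determined by `∫(x^k) = x^(k+1)/(k+1)`. -/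
noncomputable def intOp1 (K : Type*) [Field K] : Module.End K (Polynomial K) :=
  (Polynomial.basisMonomials K).constr K
    (fun k => ((k : K) + 1)⁻¹ • Polynomial.X ^ (k + 1))

/-- The algebra `I_1` of polynomial integro-differential operators in one variable. -/
noncomputable def IDO1 (K : Type*) [Field K] : Subalgebra K (Module.End K (Polynomial K)) :=
  Algebra.adjoin K {xOp1 K, dOp1 K, intOp1 K}

/-- `e_00 = 1 - ∫∘∂`, as an element of `I_1`. -/
noncomputable def e00 (K : Type*) [Field K] : IDO1 K :=
  1 - ⟨intOp1 K, Algebra.subset_adjoin (by simp)⟩ * ⟨dOp1 K, Algebra.subset_adjoin (by simp)⟩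

/-- The two-sided ideal `F` of `I_1` generated by `e_00`. -/
noncomputable def Fideal (K : Type*) [Field K] : TwoSidedIdeal (IDO1 K) :=
  TwoSidedIdeal.span {e00 K}

/-- `∂` as an element of `I_1`. -/
noncomputable def dElt1 (K : Type*) [Field K] : IDO1 K :=
  ⟨dOp1 K, Algebra.subset_adjoin (by simp)⟩

/-- `∫` as an element of `I_1`. -/
noncomputable def intElt1 (K : Type*) [Field K] : IDO1 K :=
  ⟨intOp1 K, Algebra.subset_adjoin (by simp)⟩


lemma d_int_op (K : Type*) [Field K] [CharZero K] : (dOp1 K) * (intOp1 K) = 1 := by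
  apply (Polynomial.basisMonomials K).ext
  intro k
  have hk : ((k : K) + 1) ≠ 0 := Nat.cast_add_one_ne_zero k
  have hb : (Polynomial.basisMonomials K) k = Polynomial.X ^ k := by
    simp [Polynomial.coe_basisMonomials, Polynomial.monomial_one_right_eq_X_pow]
  have h1 : (intOp1 K) ((Polynomial.basisMonomials K) k)
      = ((k : K) + 1)⁻¹ • Polynomial.X ^ (k + 1) := by
    rw [intOp1, Module.Basis.constr_basis]
  rw [Module.End.mul_apply, h1]
  show Polynomial.derivative _ = _
  rw [map_smul, Polynomial.derivative_X_pow]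
  simp only [Nat.cast_add, Nat.cast_one, Nat.add_sub_cancel, Module.End.one_apply, hb,
    Polynomial.smul_eq_C_mul, ← mul_assoc, ← Polynomial.C_mul, inv_mul_cancel₀ hk,
    Polynomial.C_1, one_mul]

section GenRing
variable {R : Type*} [Ring R]

lemma gen_decompL (i d u : R) (h : d * i = 1) :
    u = (u * i) * d + u * (1 - i * d) := by
  rw [mul_sub u 1 (i*d), mul_one, mul_assoc u i d, add_sub_cancel]

lemma gen_decompR (i d u : R) (h : d * i = 1) :
    u = i * (d * u) + (1 - i * d) * u := by
  rw [sub_mul 1 (i*d) u, one_mul, mul_assoc i d u, add_sub_cancel]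

lemma gen_e_i (i d : R) (h : d * i = 1) : (1 - i * d) * i = 0 := by
  rw [sub_mul 1 (i*d) i, one_mul, mul_assoc i d i, h, mul_one, sub_self]

lemma gen_d_e (i d : R) (h : d * i = 1) : d * (1 - i * d) = 0 := by
  rw [mul_sub d 1 (i*d), mul_one, ← mul_assoc d i d, h, one_mul, sub_self]

lemma gen_interL (i d a b : R) (h : d * i = 1) (hab : a * d = b * (1 - i * d)) :
    a * d = 0 := by
  have ha : a = 0 := by
    have h2 := congrArg (· * i) hab
    simpa [mul_assoc, h, gen_e_i i d h,
      show b * ((1 - i * d) * i) = b * 0 from by rw [gen_e_i i d h]] using h2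
  rw [ha, zero_mul]

lemma gen_interR (i d a b : R) (h : d * i = 1) (hab : i * a = (1 - i * d) * b) :
    i * a = 0 := by
  have ha : a = 0 := by
    have h2 := congrArg (d * ·) hab
    simpa [← mul_assoc, h, gen_d_e i d h] using h2
  rw [ha, mul_zero]

end GenRing

set_option synthInstance.maxHeartbeats 1000000
set_option maxHeartbeats 1000000

lemma d_int_elt (K : Type*) [Field K] [CharZero K] : dElt1 K * intElt1 K = 1 :=
  Subtype.ext (d_int_op K)

lemma e00_eq (K : Type*) [Field K] : e00 K = 1 - intElt1 K * dElt1 K := rfl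

/-- As a left module over itself, `I_1 = I_1·∂ ⊕ I_1·e_00`; applying the involution, as a
right module `I_1 = ∫·I_1 ⊕ e_00·I_1`. -/
theorem statement15 (K : Type*) [Field K] [CharZero K] :
    (∀ u : IDO1 K, ∃ a b : IDO1 K, u = a * dElt1 K + b * e00 K) ∧
    (∀ a b : IDO1 K, a * dElt1 K = b * e00 K → a * dElt1 K = 0) ∧
    (∀ u : IDO1 K, ∃ a b : IDO1 K, u = intElt1 K * a + e00 K * b) ∧
    (∀ a b : IDO1 K, intElt1 K * a = e00 K * b → intElt1 K * a = 0) := by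
  have hdi := d_int_elt K
  rw [e00_eq]
  exact ⟨fun u => ⟨u * intElt1 K, u, gen_decompL _ _ u hdi⟩,
    fun a b hab => gen_interL _ _ a b hdi hab,
    fun u => ⟨dElt1 K * u, u, gen_decompR _ _ u hdi⟩,
    fun a b hab => gen_interR _ _ a b hdi hab⟩
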